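/- Let X ⊂ ℝ^d (d ≥ 1) be a compact convex set and suppose there exist x₀ ∈ X and 0 < r ≤ R with B(x₀, r) ⊆ X ⊆ B(x₀, R). Let S be the random-direction kernel S(x, A) = ∫_{S^{d-1}} ν_{x,e}(A) dσ(e). Then for every x ∈ X and every measurable A, S(x, A) ≥ θ·ν(A), where θ = r^d / (d · (R+r)^{d-1} · R) and ν is the normalized Lebesgue measure on B(x₀, r). -/

import Mathlib

open MeasureTheory

/-- The uniform probability measure `ν_{x,e}` on the chord `{x + t·e : t ∈ ℝ} ∩ X` of `X`
through `x` in direction `e` (a unit vector): the pushforward under `t ↦ x + t·e` of the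
normalized Lebesgue measure on `{t : x + t·e ∈ X}`, or the Dirac mass at `x` if the chord
is degenerate. -/
noncomputable def chordMeasure {d : ℕ} (X : Set (EuclideanSpace ℝ (Fin d)))
    (e x : EuclideanSpace ℝ (Fin d)) : Measure (EuclideanSpace ℝ (Fin d)) :=
  if volume {t : ℝ | x + t • e ∈ X} = 0 then Measure.dirac x
  else (volume {t : ℝ | x + t • e ∈ X})⁻¹ •
    Measure.map (fun t : ℝ => x + t • e) (volume.restrict {t : ℝ | x + t • e ∈ X})

/-- The uniform (rotation-invariant) probability measure `σ` on the unit sphere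
`S^{d-1} ⊂ ℝ^d`, obtained by normalizing the sphere measure induced by Lebesgue measure. -/
noncomputable def sphereUniform (d : ℕ) :
    Measure (Metric.sphere (0 : EuclideanSpace ℝ (Fin d)) 1) :=
  ((volume : Measure (EuclideanSpace ℝ (Fin d))).toSphere Set.univ)⁻¹ •
    (volume : Measure (EuclideanSpace ℝ (Fin d))).toSphere

/-!
Write `s = A ∩ B(x₀, r)`. Polar coordinates about `x` give
`vol s = ∫_{S^{d-1}} ∫_0^∞ t^{d-1} 1_s(x + t e) dt de`, and since `s` lies within distance
`R + r` of `x` the weight `t^{d-1}` is at most `(R + r)^{d-1}`. Adding the same bound for the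
opposite rays yields `2 vol s ≤ (R + r)^{d-1} ∫_{S^{d-1}} |{t : x + t e ∈ s}| de`. Every chord of
`X` has length at most `2R`, so `|{t : x + t e ∈ s}| ≤ 2R ν_{x,e}(A)`. The constant `θ` comes out
after normalizing by `vol B(x₀, r) = r^d vol B(0, 1)` and by the total surface measure
`d vol B(0, 1)` of the sphere.
-/

open Metric Set
open scoped ENNReal

section PolarCoordinates

variable {E : Type*} [NormedAddCommGroup E] [NormedSpace ℝ E] [FiniteDimensional ℝ E]
  [MeasurableSpace E] [BorelSpace E] [Nontrivial E] (μ : Measure E) [μ.IsAddHaarMeasure]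

theorem lintegral_eq_lintegral_toSphere_lintegral_Ioi {f : E → ℝ≥0∞} (hf : Measurable f) :
    ∫⁻ y, f y ∂μ = ∫⁻ e : sphere (0 : E) 1, ∫⁻ t in Ioi (0 : ℝ),
      ENNReal.ofReal (t ^ (Module.finrank ℝ E - 1)) * f (t • (e : E)) ∂volume ∂μ.toSphere :=
  calc ∫⁻ y, f y ∂μ = ∫⁻ y : ({0}ᶜ : Set E), f y ∂(μ.comap (↑)) := by
        rw [lintegral_subtype_comap (measurableSet_singleton _).compl, restrict_compl_singleton]
    _ = ∫⁻ p, f (p.2.1 • p.1.1) ∂μ.toSphere.prod (.volumeIoiPow (Module.finrank ℝ E - 1)) := by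
        simpa using ((μ.measurePreserving_homeomorphUnitSphereProd.symm
          (homeomorphUnitSphereProd E).toMeasurableEquiv).lintegral_comp_emb
          (MeasurableEquiv.measurableEmbedding _) (fun y : ({0}ᶜ : Set E) ↦ f y)).symm
    _ = ∫⁻ e, ∫⁻ t, f (t.1 • e.1) ∂.volumeIoiPow (Module.finrank ℝ E - 1) ∂μ.toSphere :=
        lintegral_prod _ (by fun_prop)
    _ = _ := by
        refine lintegral_congr fun e ↦ ?_
        rw [Measure.volumeIoiPow, lintegral_withDensity_eq_lintegral_mul _ (by fun_prop)
          (by fun_prop)]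
        exact lintegral_subtype_comap measurableSet_Ioi
          (fun t ↦ ENNReal.ofReal (t ^ (Module.finrank ℝ E - 1)) * f (t • (e : E)))

theorem measure_le_ofReal_pow_mul_lintegral_toSphere_volume_Ioi {s : Set E}
    (hs : MeasurableSet s) {x : E} {ρ : ℝ} (hsx : s ⊆ closedBall x ρ) :
    μ s ≤ ENNReal.ofReal (ρ ^ (Module.finrank ℝ E - 1)) *
      ∫⁻ e : sphere (0 : E) 1, volume ({t : ℝ | x + t • (e : E) ∈ s} ∩ Ioi 0) ∂μ.toSphere := by
  set n := Module.finrank ℝ E - 1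
  have radial_bound (e : sphere (0 : E) 1) :
      ∫⁻ t in Ioi (0 : ℝ), ENNReal.ofReal (t ^ n) * s.indicator 1 (x + t • (e : E)) ∂volume ≤
        ENNReal.ofReal (ρ ^ n) * volume ({t : ℝ | x + t • (e : E) ∈ s} ∩ Ioi 0) := by
    have hline : MeasurableSet {t : ℝ | x + t • (e : E) ∈ s} := hs.preimage (by fun_prop)
    calc _ ≤ ∫⁻ t in Ioi (0 : ℝ), ENNReal.ofReal (ρ ^ n) *
            {t : ℝ | x + t • (e : E) ∈ s}.indicator 1 t ∂volume := by
          refine setLIntegral_mono (measurable_const.mul (measurable_one.indicator hline))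
            fun t (ht : 0 < t) ↦ ?_
          by_cases hmem : x + t • (e : E) ∈ s
          · have ht_le : t ≤ ρ := by
              simpa [norm_smul, abs_of_pos ht] using mem_closedBall_iff_norm.1 (hsx hmem)
            simp only [indicator_of_mem hmem,
              indicator_of_mem (show t ∈ {t : ℝ | x + t • (e : E) ∈ s} from hmem), Pi.one_apply]
            gcongr
          · simp [indicator_of_notMem hmem]
      _ = _ := by
          rw [lintegral_const_mul' _ _ ENNReal.ofReal_ne_top, lintegral_indicator_one hline,
            Measure.restrict_apply hline]
  calc μ s = ∫⁻ y, s.indicator 1 (x + y) ∂μ := by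
        rw [lintegral_add_left_eq_self (s.indicator 1) x, lintegral_indicator_one hs]
    _ = _ := lintegral_eq_lintegral_toSphere_lintegral_Ioi μ
        ((measurable_one.indicator hs).comp (measurable_const_add x))
    _ ≤ ∫⁻ e : sphere (0 : E) 1, ENNReal.ofReal (ρ ^ n) *
          volume ({t : ℝ | x + t • (e : E) ∈ s} ∩ Ioi 0) ∂μ.toSphere :=
        lintegral_mono radial_bound
    _ = _ := lintegral_const_mul' _ _ ENNReal.ofReal_ne_top

theorem two_mul_measure_le_ofReal_pow_mul_lintegral_toSphere_volume [μ.IsNegInvariant]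
    {s : Set E} (hs : MeasurableSet s) {x : E} {ρ : ℝ} (hsx : s ⊆ closedBall x ρ) :
    2 * μ s ≤ ENNReal.ofReal (ρ ^ (Module.finrank ℝ E - 1)) *
      ∫⁻ e : sphere (0 : E) 1, volume {t : ℝ | x + t • (e : E) ∈ s} ∂μ.toSphere := by
  set L : E → Set ℝ := fun e ↦ {t : ℝ | x + t • e ∈ s}
  have h_pos := measure_le_ofReal_pow_mul_lintegral_toSphere_volume_Ioi μ hs hsx
  -- The negative half-lines are the positive half-lines of the reflected set `-s` about `-x`.
  have h_neg := measure_le_ofReal_pow_mul_lintegral_toSphere_volume_Ioi μ hs.neg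
    (x := -x) (by rw [← neg_closedBall]; exact neg_subset_neg.2 hsx)
  have h_reflect (e : E) : {t : ℝ | -x + t • e ∈ -s} ∩ Ioi 0 = -(L e ∩ Iio 0) := by
    ext t
    simp [L, neg_add_eq_sub, sub_eq_add_neg]
  simp only [Measure.measure_neg, h_reflect] at h_neg
  have h_split (e : E) : volume (L e ∩ Ioi 0) + volume (L e ∩ Iio 0) ≤ volume (L e) :=
    calc _ ≤ volume (L e ∩ Ioi 0) + volume (L e \ Ioi 0) := by
          gcongr
          exact fun t ⟨ht, (ht' : t < 0)⟩ ↦ ⟨ht, fun (ht_pos : 0 < t) ↦ lt_asymm ht' ht_pos⟩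
      _ = volume (L e) := measure_inter_add_sdiff _ measurableSet_Ioi
  calc 2 * μ s = μ s + μ s := two_mul _
    _ ≤ _ := add_le_add h_pos h_neg
    _ ≤ ENNReal.ofReal (ρ ^ (Module.finrank ℝ E - 1)) *
          ∫⁻ e : sphere (0 : E) 1, volume (L e ∩ Ioi 0) + volume (L e ∩ Iio 0) ∂μ.toSphere := by
        rw [← mul_add]
        gcongr
        exact le_lintegral_add _ _
    _ ≤ _ := by gcongr with e; exact h_split e

end PolarCoordinates

theorem volume_setOf_add_smul_mem_le {E : Type*} [NormedAddCommGroup E] [NormedSpace ℝ E]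
    {X : Set E} {x₀ : E} {R : ℝ} (hX : X ⊆ closedBall x₀ R) (x : E) {e : E} (he : ‖e‖ = 1) :
    volume {t : ℝ | x + t • e ∈ X} ≤ ENNReal.ofReal (2 * R) := by
  refine (Real.volume_le_diam _).trans (ediam_le fun a ha b hb ↦ ?_)
  rw [edist_dist]
  refine ENNReal.ofReal_le_ofReal ?_
  calc dist a b = dist (x + a • e) (x + b • e) := by
        simp [dist_eq_norm, ← sub_smul, norm_smul, he, Real.norm_eq_abs]
    _ ≤ dist (x + a • e) x₀ + dist (x + b • e) x₀ := dist_triangle_right _ _ _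
    _ ≤ R + R := add_le_add (hX ha) (hX hb)
    _ = 2 * R := (two_mul R).symm

theorem volume_setOf_add_smul_mem_inter_le_mul_chordMeasure {d : ℕ}
    {X A : Set (EuclideanSpace ℝ (Fin d))} (hA : MeasurableSet A) {x₀ : EuclideanSpace ℝ (Fin d)}
    {R : ℝ} (hX : X ⊆ closedBall x₀ R) (x : EuclideanSpace ℝ (Fin d))
    {e : EuclideanSpace ℝ (Fin d)} (he : ‖e‖ = 1) :
    volume {t : ℝ | x + t • e ∈ A ∩ X} ≤ ENNReal.ofReal (2 * R) * chordMeasure X e x A := by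
  set V := volume {t : ℝ | x + t • e ∈ X}
  by_cases hV : V = 0
  · exact (measure_mono_null (fun t ht ↦ ht.2) hV).trans_le zero_le
  have hV_le : V ≤ ENNReal.ofReal (2 * R) := volume_setOf_add_smul_mem_le hX x he
  rw [chordMeasure, if_neg hV, Measure.smul_apply, smul_eq_mul,
    Measure.map_apply (by fun_prop) hA, Measure.restrict_apply (hA.preimage (by fun_prop))]
  calc volume {t : ℝ | x + t • e ∈ A ∩ X} = V * V⁻¹ * volume {t : ℝ | x + t • e ∈ A ∩ X} := by
        rw [ENNReal.mul_inv_cancel hV (hV_le.trans_lt ENNReal.ofReal_lt_top).ne, one_mul]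
    _ ≤ _ := by
        rw [mul_assoc]
        gcongr
        exact subset_rfl

theorem volume_inter_closedBall_le_mul_lintegral_chordMeasure {d : ℕ} (hd : 1 ≤ d)
    {X A : Set (EuclideanSpace ℝ (Fin d))} (hA : MeasurableSet A) {x₀ x : EuclideanSpace ℝ (Fin d)}
    {r R : ℝ} (hin : closedBall x₀ r ⊆ X) (hout : X ⊆ closedBall x₀ R) (hx : x ∈ X) :
    volume (A ∩ closedBall x₀ r) ≤ ENNReal.ofReal ((R + r) ^ (d - 1) * R) *
      ∫⁻ e : sphere (0 : EuclideanSpace ℝ (Fin d)) 1, chordMeasure X e x A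
        ∂(volume : Measure (EuclideanSpace ℝ (Fin d))).toSphere := by
  have : Nonempty (Fin d) := ⟨⟨0, hd⟩⟩
  have hxR : dist x x₀ ≤ R := hout hx
  have hs_ball : A ∩ closedBall x₀ r ⊆ closedBall x (R + r) :=
    inter_subset_right.trans (closedBall_subset_closedBall' (by rw [dist_comm]; linarith))
  have h_lines := two_mul_measure_le_ofReal_pow_mul_lintegral_toSphere_volume volume
    (hA.inter measurableSet_closedBall) hs_ball
  rw [finrank_euclideanSpace_fin] at h_lines
  have h_chord (e : sphere (0 : EuclideanSpace ℝ (Fin d)) 1) :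
      volume {t : ℝ | x + t • (e : EuclideanSpace ℝ (Fin d)) ∈ A ∩ closedBall x₀ r} ≤
        ENNReal.ofReal (2 * R) * chordMeasure X e x A :=
    (measure_mono fun _ ht ↦ ⟨ht.1, hin ht.2⟩ :
      _ ≤ volume {t : ℝ | x + t • (e : EuclideanSpace ℝ (Fin d)) ∈ A ∩ X}).trans
      (volume_setOf_add_smul_mem_inter_le_mul_chordMeasure hA hout x (norm_eq_of_mem_sphere e))
  refine (ENNReal.mul_le_mul_iff_right two_ne_zero ENNReal.ofNat_ne_top).1 ?_
  calc 2 * volume (A ∩ closedBall x₀ r) ≤ _ := h_lines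
    _ ≤ ENNReal.ofReal ((R + r) ^ (d - 1)) * ∫⁻ e : sphere (0 : EuclideanSpace ℝ (Fin d)) 1,
          ENNReal.ofReal (2 * R) * chordMeasure X e x A
            ∂(volume : Measure (EuclideanSpace ℝ (Fin d))).toSphere := by
        gcongr with e
        exact h_chord e
    _ = _ := by
        rw [lintegral_const_mul' _ _ ENNReal.ofReal_ne_top, ENNReal.ofReal_mul zero_le_two,
          ENNReal.ofReal_mul' (dist_nonneg.trans hxR), ENNReal.ofReal_ofNat]
        ring

theorem ofReal_div_mul_inv_eq_inv_mul_inv {d : ℕ} (hd : d ≠ 0) {a b : ℝ} (ha : 0 < a) (hb : 0 < b)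
    {ι : ℝ≥0∞} (hι₀ : ι ≠ 0) (hι : ι ≠ ⊤) :
    ENNReal.ofReal (a / (d * b)) * (ENNReal.ofReal a * ι)⁻¹ =
      ((d : ℝ≥0∞) * ι)⁻¹ * (ENNReal.ofReal b)⁻¹ := by
  have hd' : (d : ℝ≥0∞) * ι ≠ 0 := mul_ne_zero (Nat.cast_ne_zero.2 hd) hι₀
  rw [← ENNReal.toReal_eq_toReal_iff'
    (ENNReal.mul_ne_top ENNReal.ofReal_ne_top
      (ENNReal.inv_ne_top.2 (mul_ne_zero (ENNReal.ofReal_pos.2 ha).ne' hι₀)))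
    (ENNReal.mul_ne_top (ENNReal.inv_ne_top.2 hd')
      (ENNReal.inv_ne_top.2 (ENNReal.ofReal_pos.2 hb).ne'))]
  simp only [ENNReal.toReal_mul, ENNReal.toReal_inv, ENNReal.toReal_ofReal ha.le,
    ENNReal.toReal_ofReal hb.le, ENNReal.toReal_natCast,
    ENNReal.toReal_ofReal (div_pos ha (mul_pos (Nat.cast_pos.2 (Nat.pos_of_ne_zero hd)) hb)).le]
  have : 0 < ι.toReal := ENNReal.toReal_pos hι₀ hι
  field_simp

theorem random_direction_minorization_general
    {d : ℕ} (hd : 1 ≤ d) (X : Set (EuclideanSpace ℝ (Fin d)))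
    (x₀ : EuclideanSpace ℝ (Fin d))
    (r R : ℝ) (hr : 0 < r) (hrR : r ≤ R)
    (hin : Metric.closedBall x₀ r ⊆ X) (hout : X ⊆ Metric.closedBall x₀ R) :
    ∀ x ∈ X, ∀ A : Set (EuclideanSpace ℝ (Fin d)), MeasurableSet A →
      ENNReal.ofReal (r ^ d / (d * (R + r) ^ (d - 1) * R)) *
          ((volume (Metric.closedBall x₀ r))⁻¹ •
            volume.restrict (Metric.closedBall x₀ r)) A
        ≤ ∫⁻ e : Metric.sphere (0 : EuclideanSpace ℝ (Fin d)) 1,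
            chordMeasure X (↑e) x A ∂(sphereUniform d) := by
  intro x hx A hA
  have hd₀ : d ≠ 0 := by omega
  set ι := volume (ball (0 : EuclideanSpace ℝ (Fin d)) 1)
  have hι₀ : ι ≠ 0 := (measure_ball_pos _ _ one_pos).ne'
  have hball : volume (closedBall x₀ r) = ENNReal.ofReal (r ^ d) * ι := by
    rw [Measure.addHaar_closedBall _ _ hr.le, finrank_euclideanSpace_fin]
  have hsphere : ∫⁻ e, chordMeasure X (↑e) x A ∂(sphereUniform d) =
      ((d : ℝ≥0∞) * ι)⁻¹ * ∫⁻ e, chordMeasure X (↑e) x A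
        ∂(volume : Measure (EuclideanSpace ℝ (Fin d))).toSphere := by
    rw [sphereUniform, lintegral_smul_measure, Measure.toSphere_apply_univ,
      finrank_euclideanSpace_fin, smul_eq_mul]
  have hc : 0 < (R + r) ^ (d - 1) * R := by
    have hR : 0 < R := hr.trans_le hrR
    positivity
  rw [Measure.smul_apply, Measure.restrict_apply hA, smul_eq_mul, hball, hsphere, ← mul_assoc,
    mul_assoc (d : ℝ), ofReal_div_mul_inv_eq_inv_mul_inv hd₀ (pow_pos hr d) hc hι₀
      measure_ball_lt_top.ne, mul_assoc]
  gcongr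
  rw [ENNReal.inv_mul_le_iff (ENNReal.ofReal_pos.2 hc).ne' ENNReal.ofReal_ne_top]
  exact volume_inter_closedBall_le_mul_lintegral_chordMeasure hd hA hin hout hx

/-- **Minorization for the random-direction algorithm.** If `X ⊂ ℝ^d` is compact convex with
`B(x₀, r) ⊆ X ⊆ B(x₀, R)`, `0 < r ≤ R`, then the random-direction kernel
`S(x, A) = ∫_{S^{d-1}} ν_{x,e}(A) dσ(e)` satisfies `S(x, A) ≥ θ·ν(A)` for every `x ∈ X`,
where `θ = r^d / (d·(R+r)^{d-1}·R)` and `ν` is the normalized Lebesgue measure on `B(x₀, r)`. -/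
theorem random_direction_minorization
    {d : ℕ} (hd : 1 ≤ d) (X : Set (EuclideanSpace ℝ (Fin d)))
    (hXc : IsCompact X) (hXconv : Convex ℝ X)
    (x₀ : EuclideanSpace ℝ (Fin d)) (hx₀ : x₀ ∈ X)
    (r R : ℝ) (hr : 0 < r) (hrR : r ≤ R)
    (hin : Metric.closedBall x₀ r ⊆ X) (hout : X ⊆ Metric.closedBall x₀ R) :
    ∀ x ∈ X, ∀ A : Set (EuclideanSpace ℝ (Fin d)), MeasurableSet A →
      ENNReal.ofReal (r ^ d / (d * (R + r) ^ (d - 1) * R)) *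
          ((volume (Metric.closedBall x₀ r))⁻¹ •
            volume.restrict (Metric.closedBall x₀ r)) A
        ≤ ∫⁻ e : Metric.sphere (0 : EuclideanSpace ℝ (Fin d)) 1,
            chordMeasure X (↑e) x A ∂(sphereUniform d) :=
  random_direction_minorization_general hd X x₀ r R hr hrR hin hout
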